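/- arXiv:2111.02997 — 4 statements merged into one kernel-verified Lean document; each statement's English description precedes it below -/
import Mathlib

section
/- Let A be an n×n real matrix such that (i) all entries of A are nonnegative, (ii) every column sum of A is at most 2, and (iii) every row sum of A is strictly positive and at most κ₀ for some κ₀ ∈ (0,1). Then for every p > 1 and every x ∈ ℝⁿ, ‖Ax‖_p ≤ (2κ₀^{p-1})^{1/p} ‖x‖_p. Consequently, if p is large enough that 2κ₀^{p-1} < 1, A is a contraction in the ℓ_p norm. -/
/-!
Hölder's inequality with weights `A i j` (Jensen for `t ↦ t ^ p` with the row-normalized weights)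
gives `|(A x) i| ^ p ≤ r_i ^ (p - 1) * ∑ j, A i j * |x j| ^ p`, where `r_i ≤ κ₀` is the `i`-th row
sum. Summing over `i` and exchanging the sums turns the weights into column sums, which are at
most `2`; this is the Schur test for `ℓ^p`.
-/

open Finset Real

theorem Real.inner_rpow_le_weight_rpow_mul_Lp {ι : Type*} (s : Finset ι) {p : ℝ} (hp : 1 ≤ p)
    (w f : ι → ℝ) (hw : ∀ i, 0 ≤ w i) (hf : ∀ i, 0 ≤ f i) :
    (∑ i ∈ s, w i * f i) ^ p ≤ (∑ i ∈ s, w i) ^ (p - 1) * ∑ i ∈ s, w i * f i ^ p := by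
  have hp₀ : p ≠ 0 := by positivity
  calc (∑ i ∈ s, w i * f i) ^ p
      ≤ ((∑ i ∈ s, w i) ^ (1 - p⁻¹) * (∑ i ∈ s, w i * f i ^ p) ^ p⁻¹) ^ p := by
        gcongr
        · exact sum_nonneg fun i _ => mul_nonneg (hw i) (hf i)
        · exact inner_le_weight_mul_Lp_of_nonneg s hp w f hw hf
    _ = (∑ i ∈ s, w i) ^ (p - 1) * ∑ i ∈ s, w i * f i ^ p := by
        have hW : 0 ≤ ∑ i ∈ s, w i := sum_nonneg fun i _ => hw i
        have hWf : 0 ≤ ∑ i ∈ s, w i * f i ^ p :=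
          sum_nonneg fun i _ => mul_nonneg (hw i) (rpow_nonneg (hf i) p)
        rw [mul_rpow (rpow_nonneg hW _) (rpow_nonneg hWf _), ← rpow_mul hW, ← rpow_mul hWf,
          inv_mul_cancel₀ hp₀, rpow_one, sub_mul, inv_mul_cancel₀ hp₀, one_mul]

theorem Real.abs_inner_rpow_le_weight_rpow_mul_Lp {ι : Type*} (s : Finset ι) {p : ℝ} (hp : 1 ≤ p)
    (w x : ι → ℝ) (hw : ∀ i, 0 ≤ w i) :
    |∑ i ∈ s, w i * x i| ^ p ≤ (∑ i ∈ s, w i) ^ (p - 1) * ∑ i ∈ s, w i * |x i| ^ p := by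
  calc |∑ i ∈ s, w i * x i| ^ p ≤ (∑ i ∈ s, w i * |x i|) ^ p := by
        gcongr
        refine (abs_sum_le_sum_abs _ _).trans_eq (sum_congr rfl fun i _ => ?_)
        rw [abs_mul, abs_of_nonneg (hw i)]
    _ ≤ _ := inner_rpow_le_weight_rpow_mul_Lp s hp w (|x ·|) hw fun i => abs_nonneg _

theorem Matrix.sum_abs_mulVec_rpow_le {m n : Type*} [Fintype m] [Fintype n]
    (A : Matrix m n ℝ) (hA : ∀ i j, 0 ≤ A i j) {R C : ℝ} (hR : 0 ≤ R)
    (hrow : ∀ i, ∑ j, A i j ≤ R) (hcol : ∀ j, ∑ i, A i j ≤ C) {p : ℝ} (hp : 1 ≤ p)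
    (x : n → ℝ) :
    ∑ i, |∑ j, A i j * x j| ^ p ≤ R ^ (p - 1) * C * ∑ j, |x j| ^ p := by
  have hxp : ∀ j, 0 ≤ |x j| ^ p := fun j => rpow_nonneg (abs_nonneg _) _
  have hrowp : ∀ i, |∑ j, A i j * x j| ^ p ≤ R ^ (p - 1) * ∑ j, A i j * |x j| ^ p := by
    intro i
    refine (abs_inner_rpow_le_weight_rpow_mul_Lp univ hp (A i) x (hA i)).trans (mul_le_mul_of_nonneg_right ?_ ?_)
    · exact rpow_le_rpow (sum_nonneg fun j _ => hA i j) (hrow i) (by linarith)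
    · exact sum_nonneg fun j _ => mul_nonneg (hA i j) (hxp j)
  calc ∑ i, |∑ j, A i j * x j| ^ p ≤ ∑ i, R ^ (p - 1) * ∑ j, A i j * |x j| ^ p :=
        sum_le_sum fun i _ => hrowp i
    _ = R ^ (p - 1) * ∑ j, (∑ i, A i j) * |x j| ^ p := by
        simp_rw [← mul_sum, sum_mul]
        rw [sum_comm]
    _ ≤ R ^ (p - 1) * ∑ j, C * |x j| ^ p := by
        gcongr with j
        exact hcol j
    _ = R ^ (p - 1) * C * ∑ j, |x j| ^ p := by rw [← mul_sum, mul_assoc]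

/-- A nonnegative matrix with column sums at most 2 and row sums
in (0, κ₀] with κ₀ ∈ (0,1) satisfies ‖Ax‖_p ≤ (2 κ₀^(p-1))^(1/p) ‖x‖_p for
every real p > 1. -/
theorem stmt_3 {n : ℕ} (A : Matrix (Fin n) (Fin n) ℝ) (κ₀ : ℝ)
    (hκ : κ₀ ∈ Set.Ioo (0 : ℝ) 1)
    (hnonneg : ∀ i j, 0 ≤ A i j)
    (hcol : ∀ j, ∑ i, A i j ≤ 2)
    (hrow : ∀ i, 0 < ∑ j, A i j ∧ ∑ j, A i j ≤ κ₀)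
    (p : ℝ) (hp : 1 < p) (x : Fin n → ℝ) :
    (∑ i, |∑ j, A i j * x j| ^ p) ^ (1 / p) ≤
      (2 * κ₀ ^ (p - 1)) ^ (1 / p) * (∑ j, |x j| ^ p) ^ (1 / p) := by
  have hκ₀ : 0 ≤ κ₀ := hκ.1.le
  have hschur := A.sum_abs_mulVec_rpow_le hnonneg hκ₀ (fun i => (hrow i).2) hcol hp.le x
  calc (∑ i, |∑ j, A i j * x j| ^ p) ^ (1 / p)
      ≤ (2 * κ₀ ^ (p - 1) * ∑ j, |x j| ^ p) ^ (1 / p) := by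
        gcongr
        linarith
    _ = (2 * κ₀ ^ (p - 1)) ^ (1 / p) * (∑ j, |x j| ^ p) ^ (1 / p) :=
        mul_rpow (by positivity) (sum_nonneg fun j _ => rpow_nonneg (abs_nonneg _) _)
end

section
/- Consider a finite MDP with discount γ ∈ [0,1), reward vector r, behavior policy μ with invariant distribution d_μ(s,a) > 0 everywhere, and target policy π. Define the expected off-policy expected-SARSA operator F̄(q) = (I - D_μ(I - γP_π))q + D_μ r. Then there exist p ≥ 1 and κ ∈ (0,1) such that F̄ is a κ-contraction with respect to the ℓ_p norm, and its unique fixed point is the action-value function q_π of the target policy, i.e. q_π = (I - γP_π)^{-1} r. -/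
/-!
Put `T = I - D_μ (I - γ P_π)`, so that `F̄ q - F̄ q' = T (q - q')`. As `P_π` is row stochastic and
`0 < d_μ ≤ 1`, `T` is entrywise nonnegative with row sums `1 - (1 - γ) d_μ(s,a) < 1`; hence its
`ℓ^∞` operator norm is `< 1`. The `ℓ^p` norm lies between the sup norm and `n^(1/p)` times it, and
`n^(1/p) → 1`, so `T` is an `ℓ^p` contraction for large `p`. Since `‖T‖ < 1`, `I - T = D_μ (I - γ P_π)`
is invertible, so `F̄` has exactly one fixed point, and cancelling the positive diagonal `D_μ`
turns the fixed-point equation into the Bellman equation.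
-/

open Filter Topology Matrix

attribute [local instance] Matrix.linftyOpNormedAddCommGroup

section PNorm

variable {ι : Type*} [Fintype ι]

noncomputable def pNorm (p : ℝ) (v : ι → ℝ) : ℝ := (∑ i, |v i| ^ p) ^ (1 / p)

lemma pNorm_nonneg (p : ℝ) (v : ι → ℝ) : 0 ≤ pNorm p v :=
  Real.rpow_nonneg (Finset.sum_nonneg fun _ _ => Real.rpow_nonneg (abs_nonneg _) _) _

lemma norm_le_pNorm {p : ℝ} (hp : 0 < p) (v : ι → ℝ) : ‖v‖ ≤ pNorm p v := by
  refine (pi_norm_le_iff_of_nonneg (pNorm_nonneg p v)).2 fun i => ?_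
  calc ‖v i‖ = (|v i| ^ p) ^ (1 / p) := by
        rw [Real.norm_eq_abs, ← Real.rpow_mul (abs_nonneg _), mul_one_div_cancel hp.ne',
          Real.rpow_one]
    _ ≤ pNorm p v := by
        unfold pNorm
        gcongr
        exact Finset.single_le_sum (fun j _ => Real.rpow_nonneg (abs_nonneg (v j)) p)
          (Finset.mem_univ i)

lemma pNorm_le_card_rpow_mul_norm {p : ℝ} (hp : 0 < p) (v : ι → ℝ) :
    pNorm p v ≤ (Fintype.card ι : ℝ) ^ (1 / p) * ‖v‖ := by
  calc pNorm p v ≤ (∑ _i : ι, ‖v‖ ^ p) ^ (1 / p) := by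
        unfold pNorm
        gcongr with i
        exact norm_le_pi_norm v i
    _ = (Fintype.card ι : ℝ) ^ (1 / p) * ‖v‖ := by
        rw [Finset.sum_const, Finset.card_univ, nsmul_eq_mul,
          Real.mul_rpow (Nat.cast_nonneg _) (Real.rpow_nonneg (norm_nonneg v) p),
          ← Real.rpow_mul (norm_nonneg v), mul_one_div_cancel hp.ne', Real.rpow_one]

lemma exists_rpow_one_div_lt {x c : ℝ} (hx : 0 < x) (hc : 1 < c) :
    ∃ p ≥ (1 : ℝ), x ^ (1 / p) < c := by
  have hlim : Tendsto (fun p : ℝ => x ^ (1 / p)) atTop (𝓝 1) := by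
    simpa [one_div, Function.comp_def] using
      (Real.continuousAt_const_rpow hx.ne' (b := 0)).tendsto.comp tendsto_inv_atTop_zero
  exact ((eventually_ge_atTop 1).and (hlim.eventually_lt_const hc)).exists

end PNorm

section MatrixContraction

variable {ι : Type*} [Fintype ι]

lemma Matrix.linfty_opNorm_lt_one_of_nonneg {m n : Type*} [Fintype m] [Fintype n]
    {A : Matrix m n ℝ} (hA : ∀ i j, 0 ≤ A i j) (hrow : ∀ i, ∑ j, A i j < 1) : ‖A‖ < 1 := by
  rw [linfty_opNorm_def, NNReal.coe_lt_one, Finset.sup_lt_iff zero_lt_one]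
  intro i _
  rw [← NNReal.coe_lt_one, NNReal.coe_sum]
  simpa only [coe_nnnorm, Real.norm_of_nonneg (hA i _)] using hrow i

lemma exists_pNorm_mulVec_le [Nonempty ι] {A : Matrix ι ι ℝ} (hA : ‖A‖ < 1) :
    ∃ p ≥ (1 : ℝ), ∃ κ ∈ Set.Ioo (0 : ℝ) 1, ∀ v, pNorm p (A *ᵥ v) ≤ κ * pNorm p v := by
  obtain ⟨ρ, hAρ, hρ1⟩ := exists_between hA
  have hρ0 : 0 < ρ := (norm_nonneg A).trans_lt hAρ
  obtain ⟨p, hp1, hpρ⟩ := exists_rpow_one_div_lt (Nat.cast_pos.2 (Fintype.card_pos (α := ι)))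
    (one_lt_inv₀ hρ0 |>.2 hρ1)
  have hp : 0 < p := one_pos.trans_le hp1
  refine ⟨p, hp1, (Fintype.card ι : ℝ) ^ (1 / p) * ρ,
    ⟨by positivity, (lt_div_iff₀ hρ0).1 (by rwa [one_div ρ])⟩, fun v => ?_⟩
  calc pNorm p (A *ᵥ v) ≤ (Fintype.card ι : ℝ) ^ (1 / p) * ‖A *ᵥ v‖ :=
        pNorm_le_card_rpow_mul_norm hp _
    _ ≤ (Fintype.card ι : ℝ) ^ (1 / p) * (ρ * pNorm p v) := by
        gcongr
        calc ‖A *ᵥ v‖ ≤ ‖A‖ * ‖v‖ := linfty_opNorm_mulVec A v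
          _ ≤ ρ * pNorm p v := by gcongr; exact norm_le_pNorm hp v
    _ = _ := by ring

lemma Matrix.eq_zero_of_mulVec_eq_self {A : Matrix ι ι ℝ} (hA : ‖A‖ < 1) {v : ι → ℝ}
    (hv : A *ᵥ v = v) : v = 0 := by
  have : ‖v‖ ≤ ‖A‖ * ‖v‖ := by simpa only [hv] using linfty_opNorm_mulVec A v
  exact norm_le_zero_iff.1 (by nlinarith [norm_nonneg v])

lemma Matrix.one_sub_mulVec_eq_iff [DecidableEq ι] {A : Matrix ι ι ℝ} {q b : ι → ℝ} :
    (1 - A) *ᵥ q = b ↔ A *ᵥ q + b = q := by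
  rw [sub_mulVec, one_mulVec, sub_eq_iff_eq_add', eq_comm]

lemma Matrix.existsUnique_mulVec_add_eq_self [DecidableEq ι] {A : Matrix ι ι ℝ} (hA : ‖A‖ < 1)
    (b : ι → ℝ) : ∃! q, A *ᵥ q + b = q := by
  have hinj : Function.Injective (1 - A).mulVec := fun u w huw => by
    have : A *ᵥ (u - w) = u - w := by
      simpa using (one_sub_mulVec_eq_iff (b := 0)).1 (by rw [mulVec_sub, huw, sub_self])
    exact sub_eq_zero.1 (eq_zero_of_mulVec_eq_self hA this)
  obtain ⟨q, hq⟩ := mulVec_surjective_iff_isUnit.2 (mulVec_injective_iff_isUnit.1 hinj) b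
  exact ⟨q, one_sub_mulVec_eq_iff.1 hq,
    fun q' hq' => hinj ((one_sub_mulVec_eq_iff.2 hq').trans hq.symm)⟩

end MatrixContraction

section ExpectedSarsa

variable {ι : Type*} [Fintype ι] [DecidableEq ι]

lemma Matrix.one_sub_diagonal_mul_one_sub_smul_apply (d : ι → ℝ) (γ : ℝ) (P : Matrix ι ι ℝ)
    (i j : ι) :
    (1 - diagonal d * (1 - γ • P)) i j = (1 - d i) * (1 : Matrix ι ι ℝ) i j + γ * d i * P i j := by
  simp only [sub_apply, diagonal_mul, smul_apply, smul_eq_mul]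
  ring

lemma Matrix.norm_one_sub_diagonal_mul_one_sub_smul_lt_one {P : Matrix ι ι ℝ}
    (hP : P ∈ rowStochastic ℝ ι) {γ : ℝ} (hγ : γ ∈ Set.Ico (0 : ℝ) 1) {d : ι → ℝ}
    (hd : ∀ i, d i ∈ Set.Ioc (0 : ℝ) 1) : ‖1 - diagonal d * (1 - γ • P)‖ < 1 := by
  obtain ⟨hγ0, hγ1⟩ := hγ
  refine linfty_opNorm_lt_one_of_nonneg (fun i j => ?_) (fun i => ?_) <;>
    simp only [one_sub_diagonal_mul_one_sub_smul_apply]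
  · exact add_nonneg (mul_nonneg (sub_nonneg.2 (hd i).2) (by rw [one_apply]; positivity))
      (mul_nonneg (mul_nonneg hγ0 (hd i).1.le) (nonneg_of_mem_rowStochastic hP))
  · rw [Finset.sum_add_distrib, ← Finset.mul_sum, ← Finset.mul_sum, sum_row_of_mem_rowStochastic hP]
    simp only [one_apply, Finset.sum_ite_eq, Finset.mem_univ, if_true]
    have : 0 < (1 - γ) * d i := mul_pos (sub_pos.2 hγ1) (hd i).1
    linarith

lemma Matrix.diagonal_mulVec_injective {d : ι → ℝ} (hd : ∀ i, d i ≠ 0) :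
    Function.Injective (diagonal d).mulVec := fun u w huw =>
  funext fun i => mul_left_cancel₀ (hd i) (by simpa only [mulVec_diagonal] using congrFun huw i)

lemma policyTransition_mem_rowStochastic {S A : Type*} [Fintype S] [Fintype A] [DecidableEq S]
    [DecidableEq A] {pk : S → A → S → ℝ} (hpk : ∀ s a, (∀ s', 0 ≤ pk s a s') ∧ ∑ s', pk s a s' = 1)
    {π : S → A → ℝ} (hπ : ∀ s, (∀ a, 0 ≤ π s a) ∧ ∑ a, π s a = 1) :
    (fun sa sa' => pk sa.1 sa.2 sa'.1 * π sa'.1 sa'.2 : Matrix (S × A) (S × A) ℝ) ∈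
      rowStochastic ℝ (S × A) := by
  refine mem_rowStochastic_iff_sum.2 ⟨fun x y => mul_nonneg ((hpk ..).1 _) ((hπ _).1 _),
    fun x => ?_⟩
  simp only [Fintype.sum_prod_type, ← Finset.mul_sum, (hπ _).2, mul_one, (hpk ..).2]

end ExpectedSarsa

/-- The expected off-policy expected-SARSA operator
F̄(q) = (I - D_μ(I - γP_π)) q + D_μ r is an ℓ_p-contraction for some p ≥ 1 and
κ ∈ (0,1), and its unique fixed point is the target-policy action-value
function, i.e. the solution of (I - γP_π) q = r. -/
theorem stmt_5 {S A : Type*} [Fintype S] [Fintype A] [DecidableEq S] [DecidableEq A]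
    [Nonempty S] [Nonempty A]
    (γ : ℝ) (hγ : γ ∈ Set.Ico (0 : ℝ) 1)
    (r : S × A → ℝ)
    (pk : S → A → S → ℝ)
    (hpk : ∀ s a, (∀ s', 0 ≤ pk s a s') ∧ ∑ s', pk s a s' = 1)
    (π : S → A → ℝ)
    (hπ : ∀ s, (∀ a, 0 ≤ π s a) ∧ ∑ a, π s a = 1)
    (dμ : S × A → ℝ) (hdpos : ∀ sa, 0 < dμ sa) (hdsum : ∑ sa, dμ sa = 1) :
    let Pπ : Matrix (S × A) (S × A) ℝ := fun sa sa' => pk sa.1 sa.2 sa'.1 * π sa'.1 sa'.2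
    let Fbar : ((S × A) → ℝ) → ((S × A) → ℝ) := fun q =>
      Matrix.mulVec (1 - Matrix.diagonal dμ * (1 - γ • Pπ)) q +
        Matrix.mulVec (Matrix.diagonal dμ) r
    ∃ p ≥ (1 : ℝ), ∃ κ ∈ Set.Ioo (0 : ℝ) 1,
      (∀ q q' : (S × A) → ℝ,
        (∑ sa, |Fbar q sa - Fbar q' sa| ^ p) ^ (1 / p) ≤
          κ * (∑ sa, |q sa - q' sa| ^ p) ^ (1 / p)) ∧
      (∃! q : (S × A) → ℝ, Fbar q = q) ∧
      (∀ q : (S × A) → ℝ, Fbar q = q → Matrix.mulVec (1 - γ • Pπ) q = r) := by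
  intro Pπ Fbar
  have hd : ∀ sa, dμ sa ∈ Set.Ioc (0 : ℝ) 1 := fun sa =>
    ⟨hdpos sa, hdsum ▸ Finset.single_le_sum (fun i _ => (hdpos i).le) (Finset.mem_univ sa)⟩
  have hT : ‖1 - diagonal dμ * (1 - γ • Pπ)‖ < 1 :=
    norm_one_sub_diagonal_mul_one_sub_smul_lt_one (policyTransition_mem_rowStochastic hpk hπ) hγ hd
  obtain ⟨p, hp, κ, hκ, hcontr⟩ := exists_pNorm_mulVec_le hT
  refine ⟨p, hp, κ, hκ, fun q q' => ?_, existsUnique_mulVec_add_eq_self hT _, fun q hq => ?_⟩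
  · have hFbar_sub : (fun sa => Fbar q sa - Fbar q' sa) =
        (1 - diagonal dμ * (1 - γ • Pπ)) *ᵥ (q - q') := by
      ext sa
      simp only [Fbar, mulVec_sub, Pi.sub_apply, Pi.add_apply, add_sub_add_right_eq_sub]
    have := hcontr (q - q')
    rw [← hFbar_sub] at this
    exact this
  · refine diagonal_mulVec_injective (fun sa => (hdpos sa).ne') ?_
    rw [mulVec_mulVec, ← sub_sub_cancel 1 (diagonal dμ * _)]
    exact one_sub_mulVec_eq_iff.2 hq
end

section
/- Let M(w) = inf_{u ∈ ℝ^K} { (1/2)‖u‖_c² + (1/(2ξ))‖w-u‖_s² } be the generalized Moreau envelope of (1/2)‖·‖_c², where ‖·‖_c is an arbitrary norm, ξ > 0, and (1/2)‖·‖_s² is L-smooth. If l_cs‖w‖_s ≤ ‖w‖_c ≤ u_cs‖w‖_s for all w, and we define the norm ‖w‖_m = √(2M(w)), then (1+ξ l_cs²)^{1/2} ‖w‖_m ≤ ‖w‖_c ≤ (1+ξ u_cs²)^{1/2} ‖w‖_m for all w. -/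
/-- norm equivalence between the norm ‖w‖_m = √(2 M(w)) induced by
the generalized Moreau envelope M of (1/2)‖·‖_c² (smoothed via (1/2)‖·‖_s²) and
the norm ‖·‖_c: √(1+ξ l_cs²) ‖w‖_m ≤ ‖w‖_c ≤ √(1+ξ u_cs²) ‖w‖_m. -/
theorem stmt_15 {K : ℕ} (nc ns : (Fin K → ℝ) → ℝ)
    (hnc_nonneg : ∀ w, 0 ≤ nc w)
    (hnc_hom : ∀ (a : ℝ) w, nc (a • w) = |a| * nc w)
    (hnc_tri : ∀ w u, nc (w + u) ≤ nc w + nc u)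
    (hnc_def : ∀ w, nc w = 0 ↔ w = 0)
    (hns_nonneg : ∀ w, 0 ≤ ns w)
    (hns_hom : ∀ (a : ℝ) w, ns (a • w) = |a| * ns w)
    (hns_tri : ∀ w u, ns (w + u) ≤ ns w + ns u)
    (hns_def : ∀ w, ns w = 0 ↔ w = 0)
    (L ξ lcs ucs : ℝ) (hL : 0 < L) (hξ : 0 < ξ) (hlcs : 0 < lcs)
    (hdiff : Differentiable ℝ (fun v : Fin K → ℝ => ns v ^ 2 / 2))
    (hsmooth : ∀ x y : Fin K → ℝ,
      ns y ^ 2 / 2 ≤ ns x ^ 2 / 2 +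
        fderiv ℝ (fun v : Fin K → ℝ => ns v ^ 2 / 2) x (y - x) + L / 2 * ns (y - x) ^ 2)
    (heq : ∀ w, lcs * ns w ≤ nc w ∧ nc w ≤ ucs * ns w) :
    let M : (Fin K → ℝ) → ℝ :=
      fun w => ⨅ u : Fin K → ℝ, (nc u ^ 2 / 2 + ns (w - u) ^ 2 / (2 * ξ))
    let nm : (Fin K → ℝ) → ℝ := fun w => Real.sqrt (2 * M w)
    ∀ w, Real.sqrt (1 + ξ * lcs ^ 2) * nm w ≤ nc w ∧
      nc w ≤ Real.sqrt (1 + ξ * ucs ^ 2) * nm w := by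
  intro M nm w
  set A := 1 + ξ * lcs ^ 2 with hAdef
  set B := 1 + ξ * ucs ^ 2 with hBdef
  have hA0 : (0:ℝ) < A := by rw [hAdef]; positivity
  have hB0 : (0:ℝ) < B := by rw [hBdef]; positivity
  set c := nc w with hc
  set s := ns w with hs
  have hc0 : 0 ≤ c := hnc_nonneg w
  have hls : lcs * s ≤ c := (heq w).1
  have hbdd : BddBelow (Set.range fun u : Fin K → ℝ =>
      nc u ^ 2 / 2 + ns (w - u) ^ 2 / (2 * ξ)) := by
    refine ⟨0, fun x hx => ?_⟩
    obtain ⟨u, rfl⟩ := hx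
    have := hnc_nonneg u
    have := hns_nonneg (w - u)
    positivity
  -- lower bound on M
  have hlow : c ^ 2 / (2 * B) ≤ M w := by
    refine le_ciInf fun u => ?_
    set a := nc u with ha
    set b := ns (w - u) with hb
    have ha0 : 0 ≤ a := hnc_nonneg u
    have hb0 : 0 ≤ b := hns_nonneg (w - u)
    have htri : c ≤ a + ucs * b := by
      have h1 : c ≤ nc (w - u) + a := by
        have : nc ((w - u) + u) ≤ nc (w - u) + nc u := hnc_tri (w - u) u
        simpa [sub_add_cancel] using this
      have h2 : nc (w - u) ≤ ucs * b := (heq (w - u)).2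
      linarith
    have hcs : c ^ 2 ≤ (a + ucs * b) ^ 2 := by
      apply sq_le_sq' <;> nlinarith
    have key : c ^ 2 * ξ ≤ (a ^ 2 * ξ + b ^ 2) * B := by
      rw [hBdef]
      nlinarith [mul_le_mul_of_nonneg_left hcs hξ.le, sq_nonneg (ξ * ucs * a - b)]
    have expand : (a ^ 2 / 2 + b ^ 2 / (2 * ξ)) * (2 * B) = (a ^ 2 * ξ + b ^ 2) * B / ξ := by
      field_simp
    rw [div_le_iff₀ (by positivity), expand, le_div_iff₀ hξ]
    exact key
  have hM0 : 0 ≤ M w := le_trans (by positivity) hlow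
  -- upper bound on M
  have hup : M w ≤ c ^ 2 / (2 * A) := by
    have hstep : M w ≤ nc ((1/A) • w) ^ 2 / 2 + ns (w - (1/A) • w) ^ 2 / (2 * ξ) :=
      ciInf_le hbdd ((1/A) • w)
    have h1 : nc ((1/A) • w) = (1/A) * c := by
      rw [hnc_hom]; rw [abs_of_pos (by positivity)]
    have hwsub : w - (1/A) • w = (1 - 1/A) • w := by
      rw [sub_smul, one_smul]
    have h2 : ns (w - (1/A) • w) = (1 - 1/A) * s := by
      rw [hwsub, hns_hom, abs_of_nonneg]
      have : 1/A ≤ 1 := by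
        rw [div_le_one hA0, hAdef]; nlinarith
      linarith
    rw [h1, h2] at hstep
    have hs0 : 0 ≤ s := hns_nonneg w
    have h1A : (1:ℝ) - 1/A = ξ * lcs ^ 2 / A := by
      rw [hAdef]
      field_simp
      ring
    rw [h1A] at hstep
    refine le_trans hstep ?_
    rw [← sub_nonneg]
    have hid : c ^ 2 / (2 * A) - ((1/A * c) ^ 2 / 2 + (ξ * lcs ^ 2 / A * s) ^ 2 / (2 * ξ)) =
        ξ * lcs ^ 2 * (c ^ 2 - lcs ^ 2 * s ^ 2) / (2 * A ^ 2) := by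
      rw [hAdef]
      field_simp
      ring
    rw [hid]
    apply div_nonneg _ (by positivity)
    apply mul_nonneg (by positivity)
    nlinarith [mul_le_mul hls hls (mul_nonneg hlcs.le hs0) hc0]
  constructor
  · -- sqrt A * nm w ≤ c
    have h2M : A * (2 * M w) ≤ c ^ 2 := by
      rw [le_div_iff₀ (by positivity)] at hup
      nlinarith [hup]
    calc Real.sqrt A * nm w = Real.sqrt (A * (2 * M w)) := by
          rw [Real.sqrt_mul hA0.le]
      _ ≤ Real.sqrt (c ^ 2) := Real.sqrt_le_sqrt h2M
      _ = c := by rw [Real.sqrt_sq hc0]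
  · -- c ≤ sqrt B * nm w
    have h2M : c ^ 2 ≤ B * (2 * M w) := by
      rw [div_le_iff₀ (by positivity)] at hlow
      nlinarith [hlow]
    calc c = Real.sqrt (c ^ 2) := by rw [Real.sqrt_sq hc0]
      _ ≤ Real.sqrt (B * (2 * M w)) := Real.sqrt_le_sqrt h2M
      _ = Real.sqrt B * nm w := by rw [Real.sqrt_mul hB0.le]
end

section
/- Let F̄ : ℝ^K → ℝ^K be a κ-contraction (κ ∈ (0,1)) with respect to a norm ‖·‖_c, with fixed point w*. Let M(x) = (1/2)‖x‖_m² be a differentiable Lyapunov function arising from a norm ‖·‖_m satisfying l‖x‖_m ≤ ‖x‖_c ≤ u‖x‖_m, where ⟨∇M(x),x'⟩ ≤ ‖x‖_m‖x'‖_m and ⟨∇M(x),x⟩ ≥ ‖x‖_m². Then for all w: ⟨∇M(w - w*), F̄(w) - w⟩ ≤ -(1 - κ·u/l)·‖w - w*‖_m². -/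
/-!
Write `F̄ w - w = (F̄ w - F̄ w*) - (w - w*)`. Contraction in `‖·‖_c` together with the norm
equivalence makes `F̄` Lipschitz in `‖·‖_m` with constant `κ u / l`, so the first term pairs with
`∇M(w - w*)` to at most `(κ u / l) ‖w - w*‖_m²`, while the second contributes at most
`-‖w - w*‖_m²`.
-/

open scoped RealInnerProductSpace

theorem map_sub_le_of_contraction_of_equiv {α : Type*} [Sub α] (F : α → α) (nc nm : α → ℝ)
    {κ l u : ℝ} (hκ : 0 ≤ κ) (hl : 0 < l) (hcontr : ∀ w w', nc (F w - F w') ≤ κ * nc (w - w'))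
    (heq : ∀ x, l * nm x ≤ nc x ∧ nc x ≤ u * nm x) (w w' : α) :
    nm (F w - F w') ≤ κ * u / l * nm (w - w') := by
  rw [div_mul_eq_mul_div, le_div_iff₀ hl]
  calc nm (F w - F w') * l = l * nm (F w - F w') := mul_comm _ _
    _ ≤ nc (F w - F w') := (heq _).1
    _ ≤ κ * nc (w - w') := hcontr w w'
    _ ≤ κ * (u * nm (w - w')) := mul_le_mul_of_nonneg_left (heq _).2 hκ
    _ = κ * u * nm (w - w') := (mul_assoc _ _ _).symm

theorem inner_sub_le_neg_mul_sq {E : Type*} [NormedAddCommGroup E] [InnerProductSpace ℝ E]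
    (nm : E → ℝ) {v x y : E} {c : ℝ} (hx : 0 ≤ nm x) (hvy : ⟪v, y⟫ ≤ nm x * nm y)
    (hvx : nm x ^ 2 ≤ ⟪v, x⟫) (hy : nm y ≤ c * nm x) :
    ⟪v, y - x⟫ ≤ -(1 - c) * nm x ^ 2 := by
  have hvy' : ⟪v, y⟫ ≤ c * nm x ^ 2 := by
    nlinarith [mul_le_mul_of_nonneg_left hy hx]
  rw [inner_sub_right]
  linarith

theorem stmt_17_general {K : ℕ} (nc nm : EuclideanSpace ℝ (Fin K) → ℝ)
    (Fbar : EuclideanSpace ℝ (Fin K) → EuclideanSpace ℝ (Fin K))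
    (κ l u : ℝ) (hκ : κ ∈ Set.Ioo (0 : ℝ) 1) (hl : 0 < l)
    (wstar : EuclideanSpace ℝ (Fin K)) (hfix : Fbar wstar = wstar)
    (hcontr : ∀ w w', nc (Fbar w - Fbar w') ≤ κ * nc (w - w'))
    (heq : ∀ x, l * nm x ≤ nc x ∧ nc x ≤ u * nm x)
    (hnm_nonneg : ∀ x, 0 ≤ nm x)
    (g : EuclideanSpace ℝ (Fin K) → EuclideanSpace ℝ (Fin K))
    (hg1 : ∀ x x', (inner ℝ (g x) x' : ℝ) ≤ nm x * nm x')
    (hg2 : ∀ x, nm x ^ 2 ≤ (inner ℝ (g x) x : ℝ)) :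
    ∀ w, (inner ℝ (g (w - wstar)) (Fbar w - w) : ℝ) ≤
      -(1 - κ * u / l) * nm (w - wstar) ^ 2 := by
  intro w
  have hdecomp : Fbar w - w = (Fbar w - Fbar wstar) - (w - wstar) := by
    rw [hfix]; abel
  rw [hdecomp]
  exact inner_sub_le_neg_mul_sq nm (hnm_nonneg _) (hg1 _ _) (hg2 _)
    (map_sub_le_of_contraction_of_equiv Fbar nc nm hκ.1.le hl hcontr heq w wstar)

/-- Lyapunov drift inequality. If F̄ is a κ-contraction w.r.t.
‖·‖_c with fixed point w*, the norms satisfy l‖·‖_m ≤ ‖·‖_c ≤ u‖·‖_m, and g is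
the gradient field of M = (1/2)‖·‖_m² satisfying ⟨g(x), x'⟩ ≤ ‖x‖_m‖x'‖_m and
⟨g(x), x⟩ ≥ ‖x‖_m², then ⟨g(w-w*), F̄(w)-w⟩ ≤ -(1 - κ u/l) ‖w-w*‖_m². -/
theorem stmt_17 {K : ℕ} (nc nm : EuclideanSpace ℝ (Fin K) → ℝ)
    (Fbar : EuclideanSpace ℝ (Fin K) → EuclideanSpace ℝ (Fin K))
    (κ l u : ℝ) (hκ : κ ∈ Set.Ioo (0 : ℝ) 1) (hl : 0 < l) (hu : 0 < u)
    (wstar : EuclideanSpace ℝ (Fin K)) (hfix : Fbar wstar = wstar)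
    (hcontr : ∀ w w', nc (Fbar w - Fbar w') ≤ κ * nc (w - w'))
    (heq : ∀ x, l * nm x ≤ nc x ∧ nc x ≤ u * nm x)
    (hnm_nonneg : ∀ x, 0 ≤ nm x)
    (hnm_tri : ∀ x y, nm (x + y) ≤ nm x + nm y)
    (g : EuclideanSpace ℝ (Fin K) → EuclideanSpace ℝ (Fin K))
    (hg1 : ∀ x x', (inner ℝ (g x) x' : ℝ) ≤ nm x * nm x')
    (hg2 : ∀ x, nm x ^ 2 ≤ (inner ℝ (g x) x : ℝ)) :
    ∀ w, (inner ℝ (g (w - wstar)) (Fbar w - w) : ℝ) ≤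
      -(1 - κ * u / l) * nm (w - wstar) ^ 2 :=
  stmt_17_general nc nm Fbar κ l u hκ hl wstar hfix hcontr heq hnm_nonneg g hg1 hg2
end
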